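/- arXiv:1608.03081 — 2 statements merged into one kernel-verified Lean document; each statement's English description precedes it below -/
import Mathlib

section
/- Let X_n be ℝ^d-valued random vectors such that r_n(X_{nj} - θ_j) is tight for each coordinate j, with r_n → ∞, and let a_{nj} > 0 satisfy max_j a_{nj} → 0 and r_n · min_j a_{nj} → ∞. Define the random set b_n = {j : |X_{nj} - c_j| > a_{nj}} and b(θ) = {j : θ_j ≠ c_j}. Then Pr(b_n = b(θ)) → 1 as n → ∞. -/
/-!
A coordinate is misclassified only if its estimation error is large on the scale `rₙ`:
if `θⱼ = cⱼ`, misclassification means `aₙⱼ < |Xₙⱼ - θⱼ|`, i.e. `rₙ|Xₙⱼ - θⱼ| > rₙaₙⱼ → ∞`;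
if `θⱼ ≠ cⱼ`, it means `|Xₙⱼ - cⱼ| ≤ aₙⱼ → 0`, which forces `|Xₙⱼ - θⱼ| > |θⱼ - cⱼ|/2` and
again `rₙ|Xₙⱼ - θⱼ| → ∞`. Tightness makes each such event negligible, and a union bound over
the finitely many coordinates finishes the proof.
-/

open Filter MeasureTheory Topology

section

variable {Ω ι : Type*} [MeasurableSpace Ω] {μ : Measure Ω} {l : Filter ι}

theorem tendsto_measure_of_tendsto_measure_compl [IsProbabilityMeasure μ] {s : ι → Set Ω}
    (h : Tendsto (fun n => μ (s n)ᶜ) l (𝓝 0)) : Tendsto (fun n => μ (s n)) l (𝓝 1) := by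
  have hlow : Tendsto (fun n => 1 - μ (s n)ᶜ) l (𝓝 1) := by
    simpa using ENNReal.Tendsto.sub tendsto_const_nhds h (Or.inl ENNReal.one_ne_top)
  refine tendsto_of_tendsto_of_tendsto_of_le_of_le hlow tendsto_const_nhds (fun n => ?_)
    (fun n => prob_le_one)
  rw [tsub_le_iff_right, ← measure_univ (μ := μ)]
  exact measure_univ_le_add_compl _

theorem tendsto_measure_setOf_forall [IsProbabilityMeasure μ] {κ : Type*} [Fintype κ]
    {p : ι → κ → Ω → Prop} (h : ∀ j, Tendsto (fun n => μ {ω | ¬ p n j ω}) l (𝓝 0)) :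
    Tendsto (fun n => μ {ω | ∀ j, p n j ω}) l (𝓝 1) := by
  refine tendsto_measure_of_tendsto_measure_compl ?_
  have hsum : Tendsto (fun n => ∑ j, μ {ω | ¬ p n j ω}) l (𝓝 0) := by
    simpa using tendsto_finsetSum Finset.univ fun j _ => h j
  refine tendsto_of_tendsto_of_tendsto_of_le_of_le tendsto_const_nhds hsum (fun n => zero_le)
    fun n => ?_
  have hcompl : {ω | ∀ j, p n j ω}ᶜ = ⋃ j, {ω | ¬ p n j ω} := by
    ext ω; simp
  rw [hcompl]
  exact measure_iUnion_fintype_le μ _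

theorem tendsto_measure_zero_of_eventually_subset_tight {Y : ι → Ω → ℝ} {E : ι → Set Ω}
    (hY : ∀ ε : ℝ, 0 < ε → ∃ M : ℝ, ∀ᶠ n in l, μ {ω | M < Y n ω} < ENNReal.ofReal ε)
    (hE : ∀ M : ℝ, ∀ᶠ n in l, E n ⊆ {ω | M < Y n ω}) :
    Tendsto (fun n => μ (E n)) l (𝓝 0) := by
  refine ENNReal.tendsto_nhds_zero.2 fun ε hε => ?_
  rcases eq_or_ne ε ⊤ with rfl | hε_top
  · exact Eventually.of_forall fun n => le_top
  obtain ⟨M, hM⟩ := hY ε.toReal (ENNReal.toReal_pos hε.ne' hε_top)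
  filter_upwards [hM, hE M] with n hn hsub
  rw [ENNReal.ofReal_toReal hε_top] at hn
  exact ((measure_mono hsub).trans_lt hn).le

end

theorem half_abs_sub_lt_abs_sub_of_abs_sub_le {x θ c a : ℝ} (hx : |x - c| ≤ a)
    (ha : a < |θ - c| / 2) : |θ - c| / 2 < |x - θ| := by
  have := abs_sub_le θ x c
  rw [abs_sub_comm θ x] at this
  linarith

theorem eventually_setOf_threshold_misclassified_subset {Ω ι : Type*} {l : Filter ι}
    {x : ι → Ω → ℝ} {θ c : ℝ} {r a : ι → ℝ} (hr : Tendsto r l atTop) (ha : Tendsto a l (𝓝 0))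
    (hra : Tendsto (fun n => r n * a n) l atTop) (M : ℝ) :
    ∀ᶠ n in l, {ω | ¬ (a n < |x n ω - c| ↔ θ ≠ c)} ⊆ {ω | M < r n * |x n ω - θ|} := by
  by_cases hθ : θ = c
  · subst hθ
    filter_upwards [hr.eventually_gt_atTop 0, hra.eventually_gt_atTop M] with n hr_pos hM ω hω
    simp only [ne_eq, not_true_eq_false, iff_false, not_not, Set.mem_ofPred_eq] at hω
    exact hM.trans (mul_lt_mul_of_pos_left hω hr_pos)
  · have hδ : 0 < |θ - c| / 2 := half_pos (abs_pos.mpr (sub_ne_zero.mpr hθ))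
    filter_upwards [ha.eventually_lt_const hδ, hr.eventually_gt_atTop 0,
      hr.eventually_gt_atTop (M / (|θ - c| / 2))] with n ha_lt hr_pos hr_gt ω hω
    simp only [ne_eq, hθ, not_false_eq_true, iff_true, not_lt, Set.mem_ofPred_eq] at hω
    calc M < r n * (|θ - c| / 2) := (div_lt_iff₀ hδ).mp hr_gt
      _ < r n * |x n ω - θ| :=
        mul_lt_mul_of_pos_left (half_abs_sub_lt_abs_sub_of_abs_sub_le hω ha_lt) hr_pos

theorem stmt_17_general (d : ℕ) {Ω : Type*} [MeasurableSpace Ω]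
    (μ : Measure Ω) [IsProbabilityMeasure μ]
    (X : ℕ → Ω → Fin d → ℝ) (θ c : Fin d → ℝ)
    (r : ℕ → ℝ) (hr : Tendsto r atTop atTop)
    (a : ℕ → Fin d → ℝ)
    (hamax : ∀ j, Tendsto (fun n => a n j) atTop (nhds 0))
    (hamin : ∀ j, Tendsto (fun n => r n * a n j) atTop atTop)
    (htight : ∀ j, ∀ ε : ℝ, 0 < ε → ∃ M : ℝ,
      ∀ᶠ n in atTop, μ {ω | M < r n * |X n ω j - θ j|} < ENNReal.ofReal ε) :
    Tendsto (fun n =>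
        μ {ω | {j | a n j < |X n ω j - c j|} = {j | θ j ≠ c j}})
      atTop (nhds 1) := by
  simp only [Set.ext_iff, Set.mem_ofPred_eq]
  exact tendsto_measure_setOf_forall fun j =>
    tendsto_measure_zero_of_eventually_subset_tight (htight j)
      (eventually_setOf_threshold_misclassified_subset hr (hamax j) (hamin j))

/-- Consistent support recovery: if each `rₙ(Xₙⱼ - θⱼ)` is tight, `rₙ → ∞`,
`max_j aₙⱼ → 0` and `rₙ · min_j aₙⱼ → ∞`, then with
`bₙ = {j : |Xₙⱼ - cⱼ| > aₙⱼ}` and `b(θ) = {j : θⱼ ≠ cⱼ}`,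
`Pr(bₙ = b(θ)) → 1`. -/
theorem stmt_17 (d : ℕ) (hd : 0 < d) {Ω : Type*} [MeasurableSpace Ω]
    (μ : Measure Ω) [IsProbabilityMeasure μ]
    (X : ℕ → Ω → Fin d → ℝ) (θ c : Fin d → ℝ)
    (r : ℕ → ℝ) (hr_pos : ∀ n, 0 < r n) (hr : Tendsto r atTop atTop)
    (a : ℕ → Fin d → ℝ) (ha_pos : ∀ n j, 0 < a n j)
    (hamax : ∀ j, Tendsto (fun n => a n j) atTop (nhds 0))
    (hamin : ∀ j, Tendsto (fun n => r n * a n j) atTop atTop)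
    (htight : ∀ j, ∀ ε : ℝ, 0 < ε → ∃ M : ℝ,
      ∀ᶠ n in atTop, μ {ω | M < r n * |X n ω j - θ j|} < ENNReal.ofReal ε) :
    Tendsto (fun n =>
        μ {ω | {j | a n j < |X n ω j - c j|} = {j | θ j ≠ c j}})
      atTop (nhds 1) :=
  stmt_17_general d μ X θ c r hr a hamax hamin htight
end

section
/- Let V be a symmetric positive definite d×d matrix partitioned by a nonempty proper subset b, and let W be the d×d matrix whose b×b block is V_bb^{-1} and all other blocks are zero. Then W ≤ V^{-1} in the Loewner order. -/
/-!
Write `E` for the `b × d` selection matrix, so that `V_bb = E V Eᵀ` and `W = Eᵀ V_bb⁻¹ E`.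
Then `W V W = W`, and expanding shows `V⁻¹ - W = (V⁻¹ - W) V (V⁻¹ - W)`, a congruence of `V`.
-/

open Matrix

namespace Matrix

section Field

variable {m n K : Type*} [Fintype m] [DecidableEq m] [Fintype n] [DecidableEq n]
  [Field K] [PartialOrder K] [StarRing K]

theorem PosDef.posSemidef_inv_sub_of_mul_mul_self {V P : Matrix n n K} (hV : V.PosDef)
    (hP : P.IsHermitian) (hPVP : P * V * P = P) : (V⁻¹ - P).PosSemidef := by
  have hV' : IsUnit V.det := (isUnit_iff_isUnit_det V).mp hV.isUnit
  have hsymm : (V⁻¹ - P)ᴴ = V⁻¹ - P := by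
    rw [conjTranspose_sub, hV.isHermitian.inv.eq, hP.eq]
  have expand : (V⁻¹ - P) * V * (V⁻¹ - P)
      = V⁻¹ * V * V⁻¹ - V⁻¹ * (V * P) - P * V * V⁻¹ + P * V * P := by
    noncomm_ring
  have hcongr : (V⁻¹ - P)ᴴ * V * (V⁻¹ - P) = V⁻¹ - P := by
    rw [hsymm, expand, hPVP, nonsing_inv_mul _ hV', Matrix.one_mul, ← Matrix.mul_assoc,
      nonsing_inv_mul _ hV', Matrix.one_mul, Matrix.mul_assoc, mul_nonsing_inv _ hV',
      Matrix.mul_one]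
    abel
  rw [← hcongr]
  exact hV.posSemidef.conjTranspose_mul_mul_same _

theorem PosDef.posSemidef_inv_sub_conjTranspose_mul_inv_mul {V : Matrix n n K} (hV : V.PosDef)
    (E : Matrix m n K) (hE : IsUnit (E * V * Eᴴ).det) :
    (V⁻¹ - Eᴴ * (E * V * Eᴴ)⁻¹ * E).PosSemidef := by
  refine hV.posSemidef_inv_sub_of_mul_mul_self
    (isHermitian_conjTranspose_mul_mul E (isHermitian_mul_mul_conjTranspose E hV.1).inv) ?_
  calc Eᴴ * (E * V * Eᴴ)⁻¹ * E * V * (Eᴴ * (E * V * Eᴴ)⁻¹ * E)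
      = Eᴴ * ((E * V * Eᴴ)⁻¹ * (E * V * Eᴴ) * (E * V * Eᴴ)⁻¹) * E := by
        simp only [Matrix.mul_assoc]
    _ = Eᴴ * (E * V * Eᴴ)⁻¹ * E := by
        rw [nonsing_inv_mul _ hE, Matrix.one_mul, Matrix.mul_assoc]

end Field

section Selection

variable {m n R : Type*} [Fintype n] [DecidableEq n] [Semiring R]

theorem one_submatrix_mul_mul_one_submatrix (V : Matrix n n R) (f : m → n) :
    (1 : Matrix n n R).submatrix f id * V * (1 : Matrix n n R).submatrix id f =
      V.submatrix f f := by
  ext a b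
  simp [mul_apply, one_apply]

theorem one_submatrix_mul_mul_one_submatrix_val (p : n → Prop) [DecidablePred p]
    (M : Matrix {i // p i} {i // p i} R) :
    (1 : Matrix n n R).submatrix id (Subtype.val (p := p)) * M *
        (1 : Matrix n n R).submatrix (Subtype.val (p := p)) id =
      of fun i j => if h : p i ∧ p j then M ⟨i, h.1⟩ ⟨j, h.2⟩ else 0 := by
  ext i j
  have hval {k : n} (hk : ¬ p k) (x : {i // p i}) : k ≠ x := fun h => hk (h ▸ x.2)
  by_cases hi : p i
  · by_cases hj : p j
    · lift i to {i // p i} using hi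
      lift j to {i // p i} using hj
      simp [mul_apply, one_apply, Subtype.val_inj, i.2, j.2]
    · simp [mul_apply, one_apply, hj, fun x => (hval hj x).symm]
  · simp [mul_apply, one_apply, hi, hval hi]

end Selection

end Matrix

theorem stmt_19_general (d : ℕ) (V : Matrix (Fin d) (Fin d) ℝ)
    (hV : V.PosDef) (p : Fin d → Prop) [DecidablePred p] :
    let Vbb : Matrix {i // p i} {i // p i} ℝ :=
      V.submatrix Subtype.val Subtype.val
    let W : Matrix (Fin d) (Fin d) ℝ := fun i j =>
      if h : p i ∧ p j then Vbb⁻¹ ⟨i, h.1⟩ ⟨j, h.2⟩ else 0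
    (V⁻¹ - W).PosSemidef := by
  intro Vbb W
  let E : Matrix {i // p i} (Fin d) ℝ := (1 : Matrix (Fin d) (Fin d) ℝ).submatrix Subtype.val id
  have hEt : Eᴴ = (1 : Matrix (Fin d) (Fin d) ℝ).submatrix id Subtype.val := by
    rw [conjTranspose_eq_transpose_of_trivial, transpose_submatrix, transpose_one]
  have hVbb : E * V * Eᴴ = Vbb := by
    rw [hEt]
    exact one_submatrix_mul_mul_one_submatrix V Subtype.val
  have hW : Eᴴ * Vbb⁻¹ * E = W := by
    rw [hEt]
    exact one_submatrix_mul_mul_one_submatrix_val p Vbb⁻¹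
  have hVbb_det : IsUnit (E * V * Eᴴ).det := by
    rw [hVbb, ← isUnit_iff_isUnit_det]
    exact (hV.submatrix Subtype.val_injective).isUnit
  simpa only [hW, hVbb] using hV.posSemidef_inv_sub_conjTranspose_mul_inv_mul E hVbb_det

/-- For a symmetric positive definite `V` partitioned by a nonempty proper subset `b`,
the `d×d` matrix `W` whose `b×b` block is `V_bb⁻¹` and whose other blocks are `0`
satisfies `W ≤ V⁻¹` in the Loewner order. -/
theorem stmt_19 (d : ℕ) (V : Matrix (Fin d) (Fin d) ℝ)
    (hV : V.PosDef) (p : Fin d → Prop) [DecidablePred p]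
    (hb : ∃ i, p i) (hb' : ∃ i, ¬ p i) :
    let Vbb : Matrix {i // p i} {i // p i} ℝ :=
      V.submatrix Subtype.val Subtype.val
    let W : Matrix (Fin d) (Fin d) ℝ := fun i j =>
      if h : p i ∧ p j then Vbb⁻¹ ⟨i, h.1⟩ ⟨j, h.2⟩ else 0
    (V⁻¹ - W).PosSemidef :=
  stmt_19_general d V hV p
end
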